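/- arXiv:2010.13589 — 2 statements merged into one kernel-verified Lean document; each statement's English description precedes it below -/
import Mathlib

section
/- In the setting of the cascaded LoS channel with K ≥ 2 reflections, suppose additionally that all array-response vectors h̃_1 ∈ ℂ^N and h̃_2, s̃_{k,1}, s̃_{k,2}, g̃ ∈ ℂ^M have every entry of modulus 1. Choose the IRS phase shifts by co-phasing as in equation (9) (θ_{1,m} = arg((s̃_{1,1})_m) − arg((h̃_2)_m); θ_{k,m} = arg((s̃_{k,1})_m) − arg((s̃_{k−1,2})_m) for 2 ≤ k ≤ K−1; θ_{K,m} = arg((g̃)_m) − arg((s̃_{K−1,2})_m)) and the BS beamformer w = e^{i2πD/λ} h̃_1/‖h̃_1‖. Then the end-to-end channel h = gᴴ Φ_K (∏_{k=K−1}^{1} S_k Φ_k) H_1 w satisfies |h|² = M^{2K} · N · β^{K+1} / (d_0² d_K² ∏_{k=1}^{K−1} d_k²). -/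
/-!
Every link is rank one, `c_k u vᴴ` with `|c_k|² = β / d_k²`. The co-phasing shifts make `Φ_k`
map the unit-modulus vector arriving at IRS `k` onto `s̃_{k,1}`, so `S_k Φ_k` sends it to
`c_k (s̃_{k,1}ᴴ s̃_{k,1}) s̃_{k,2} = c_k M s̃_{k,2}`: along the cascade the signal stays a multiple
of a single array response and picks up the factor `c_k M` at each IRS, while the MRT beam
contributes `|c_0| ‖h̃_1‖ = |c_0| √N` at the base station.
-/

open Matrix Finset Complex

/-- `irsChain S Φ j = (S_j Φ_j)(S_{j-1} Φ_{j-1}) ⋯ (S_1 Φ_1)`, the multi-reflection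
matrix product taken in reflection order (the signal passes IRS 1 first). -/
noncomputable def irsChain {M : ℕ} (S Φ : ℕ → Matrix (Fin M) (Fin M) ℂ) :
    ℕ → Matrix (Fin M) (Fin M) ℂ
  | 0 => 1
  | (j + 1) => S (j + 1) * Φ (j + 1) * irsChain S Φ j

namespace Complex

lemma exp_arg_mul_I_of_norm_eq_one {z : ℂ} (hz : ‖z‖ = 1) : exp (arg z * I) = z := by
  simpa [hz] using norm_mul_exp_arg_mul_I z

lemma exp_arg_sub_arg_mul_I_mul {a b : ℂ} (ha : ‖a‖ = 1) (hb : ‖b‖ = 1) :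
    exp (((arg a - arg b : ℝ) : ℂ) * I) * b = a := by
  have hb0 : b ≠ 0 := norm_ne_zero_iff.mp (by rw [hb]; exact one_ne_zero)
  push_cast
  rw [sub_mul, exp_sub, exp_arg_mul_I_of_norm_eq_one ha, exp_arg_mul_I_of_norm_eq_one hb,
    div_mul_cancel₀ _ hb0]

end Complex

lemma star_dotProduct_self_eq_sum_norm_sq {ι : Type*} [Fintype ι] (v : ι → ℂ) :
    star v ⬝ᵥ v = ((∑ i, ‖v i‖ ^ 2 : ℝ) : ℂ) := by
  simp [dotProduct, conj_mul']

lemma star_dotProduct_self_of_norm_eq_one {ι : Type*} [Fintype ι] {v : ι → ℂ}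
    (hv : ∀ i, ‖v i‖ = 1) : star v ⬝ᵥ v = Fintype.card ι := by
  simp [star_dotProduct_self_eq_sum_norm_sq, hv]

lemma of_mul_mul_conj_mulVec {R m n : Type*} [CommSemiring R] [StarRing R] [Fintype n]
    (a : R) (u : m → R) (v x : n → R) :
    (of fun i j => a * u i * starRingEnd R (v j)) *ᵥ x = (a * (star v ⬝ᵥ x)) • u := by
  ext i
  simp only [mulVec, dotProduct, of_apply, Pi.smul_apply, Pi.star_apply, smul_eq_mul,
    Finset.mul_sum, Finset.sum_mul, starRingEnd_apply]
  exact Finset.sum_congr rfl fun j _ => by ring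

-- `E v / ‖v‖` with `|E| = 1` is the maximum-ratio transmission beam towards `v`.
lemma norm_star_dotProduct_mrt {ι : Type*} [Fintype ι] (v : ι → ℂ) {E : ℂ} (hE : ‖E‖ = 1) :
    ‖star v ⬝ᵥ fun j => E * v j / ((√(∑ j', ‖v j'‖ ^ 2) : ℝ) : ℂ)‖ = √(∑ j, ‖v j‖ ^ 2) := by
  set s := √(∑ j, ‖v j‖ ^ 2)
  have hdot : (star v ⬝ᵥ fun j => E * v j / (s : ℂ)) = E / s * (star v ⬝ᵥ v) := by
    simp only [dotProduct, Pi.star_apply, Finset.mul_sum]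
    exact Finset.sum_congr rfl fun j _ => by ring
  have hs : 0 ≤ s := Real.sqrt_nonneg _
  rw [hdot, star_dotProduct_self_eq_sum_norm_sq,
    ← Real.sq_sqrt (by positivity : 0 ≤ ∑ j, ‖v j‖ ^ 2), norm_mul, norm_div, hE, norm_real,
    Real.norm_of_nonneg hs, norm_real, Real.norm_of_nonneg (sq_nonneg s)]
  rcases hs.eq_or_lt with h0 | hpos
  · simp [← h0]
  · field_simp

lemma diagonal_exp_mulVec_of_cophase {ι : Type*} [Fintype ι] [DecidableEq ι] {a b : ι → ℂ}
    (ha : ∀ i, ‖a i‖ = 1) (hb : ∀ i, ‖b i‖ = 1) {θ : ι → ℝ}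
    (hθ : ∀ i, θ i = arg (a i) - arg (b i)) :
    diagonal (fun i => exp ((θ i : ℂ) * I)) *ᵥ b = a := by
  ext i
  rw [mulVec_diagonal, hθ i, exp_arg_sub_arg_mul_I_mul (ha i) (hb i)]

lemma irsChain_mulVec {M : ℕ} {S Φ : ℕ → Matrix (Fin M) (Fin M) ℂ} {v : ℕ → Fin M → ℂ}
    {α : ℕ → ℂ} {j : ℕ} (hstep : ∀ k ∈ Icc 1 j, (S k * Φ k) *ᵥ v (k - 1) = α k • v k) :
    irsChain S Φ j *ᵥ v 0 = (∏ k ∈ Icc 1 j, α k) • v j := by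
  induction j with
  | zero => simp [irsChain]
  | succ j ih =>
    have ih' := ih fun k hk => hstep k (Icc_subset_Icc_right (Nat.le_succ j) hk)
    have hlast : (S (j + 1) * Φ (j + 1)) *ᵥ v j = α (j + 1) • v (j + 1) :=
      hstep (j + 1) (by simp)
    rw [irsChain, ← mulVec_mulVec, ih', mulVec_smul, hlast,
      prod_Icc_succ_top (Nat.le_add_left 1 j), smul_smul, mul_comm]

lemma of_mul_mul_conj_mul_diagonal_mulVec_of_cophase {ι : Type*} [Fintype ι] [DecidableEq ι]
    (g : ℂ) (u : ι → ℂ) {v b : ι → ℂ} (hv : ∀ i, ‖v i‖ = 1) (hb : ∀ i, ‖b i‖ = 1)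
    {θ : ι → ℝ} (hθ : ∀ i, θ i = arg (v i) - arg (b i)) :
    ((of fun i j => g * u i * starRingEnd ℂ (v j)) * diagonal (fun i => exp ((θ i : ℂ) * I))) *ᵥ b
      = (g * Fintype.card ι) • u := by
  rw [← mulVec_mulVec, diagonal_exp_mulVec_of_cophase hv hb hθ, of_mul_mul_conj_mulVec,
    star_dotProduct_self_of_norm_eq_one hv]

noncomputable def losGain (β d lam : ℝ) : ℂ :=
  ((Real.sqrt β / d : ℝ) : ℂ) * exp (-(((2 * Real.pi * d / lam : ℝ) : ℂ) * I))

lemma norm_losGain_sq {β : ℝ} (hβ : 0 ≤ β) (d lam : ℝ) : ‖losGain β d lam‖ ^ 2 = β / d ^ 2 := by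
  rw [losGain, norm_mul, norm_exp, norm_real, Real.norm_eq_abs, mul_pow, sq_abs, div_pow,
    Real.sq_sqrt hβ]
  simp

theorem stmt5_general (M N K : ℕ) (hK : 2 ≤ K)
    (lam β : ℝ) (hβ : 0 < β)
    (d : ℕ → ℝ)
    (h1 : Fin N → ℂ) (h2 : Fin M → ℂ) (s1 s2 : ℕ → Fin M → ℂ) (gt : Fin M → ℂ)
    (hu1 : ∀ j, ‖h1 j‖ = 1) (hu2 : ∀ i, ‖h2 i‖ = 1)
    (hus1 : ∀ k i, ‖s1 k i‖ = 1) (hus2 : ∀ k i, ‖s2 k i‖ = 1)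
    (hug : ∀ i, ‖gt i‖ = 1)
    (H1 : Matrix (Fin M) (Fin N) ℂ)
    (hH1 : H1 = Matrix.of fun i j =>
      ((Real.sqrt β / d 0 : ℝ) : ℂ) * Complex.exp (-(((2 * Real.pi * d 0 / lam : ℝ) : ℂ) * Complex.I)) *
        h2 i * (starRingEnd ℂ) (h1 j))
    (S : ℕ → Matrix (Fin M) (Fin M) ℂ)
    (hS : ∀ k, S k = Matrix.of fun i j =>
      ((Real.sqrt β / d k : ℝ) : ℂ) * Complex.exp (-(((2 * Real.pi * d k / lam : ℝ) : ℂ) * Complex.I)) *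
        s2 k i * (starRingEnd ℂ) (s1 k j))
    (gH : Fin M → ℂ)
    (hgH : gH = fun i =>
      ((Real.sqrt β / d K : ℝ) : ℂ) * Complex.exp (-(((2 * Real.pi * d K / lam : ℝ) : ℂ) * Complex.I)) *
        (starRingEnd ℂ) (gt i))
    -- co-phasing phase shifts of equation (9)
    (θ : ℕ → Fin M → ℝ)
    (hθ1 : ∀ i, θ 1 i = (s1 1 i).arg - (h2 i).arg)
    (hθK : ∀ i, θ K i = (gt i).arg - (s2 (K - 1) i).arg)
    (hθmid : ∀ k, 2 ≤ k → k ≤ K - 1 → ∀ i, θ k i = (s1 k i).arg - (s2 (k - 1) i).arg)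
    (Φ : ℕ → Matrix (Fin M) (Fin M) ℂ)
    (hΦ : ∀ k, Φ k = Matrix.diagonal fun i => Complex.exp ((θ k i : ℂ) * Complex.I))
    -- MRT active beamformer of equation (10): w = e^{i2πD/λ} h̃_1/‖h̃_1‖
    (w : Fin N → ℂ)
    (hw : w = fun j =>
      Complex.exp (((2 * Real.pi * (∑ k ∈ Finset.range (K + 1), d k) / lam : ℝ) : ℂ) * Complex.I) *
        h1 j / ((Real.sqrt (∑ j', ‖h1 j'‖ ^ 2) : ℝ) : ℂ)) :
    ‖gH ⬝ᵥ ((Φ K * irsChain S Φ (K - 1) * H1) *ᵥ w)‖ ^ 2 =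
      (M : ℝ) ^ (2 * K) * (N : ℝ) * β ^ (K + 1) /
        (d 0 ^ 2 * d K ^ 2 * ∏ k ∈ Finset.Icc 1 (K - 1), d k ^ 2) := by
  set c : ℕ → ℂ := fun k => losGain β (d k) lam
  -- the signal impinging on IRS `k` is proportional to `v (k - 1)`
  set v := Function.update s2 0 h2
  have hstep : ∀ k ∈ Icc 1 (K - 1), (S k * Φ k) *ᵥ v (k - 1) = (c k * M) • v k := by
    intro k hk
    rw [mem_Icc] at hk
    have hin : ∀ i, ‖v (k - 1) i‖ = 1 ∧ θ k i = arg (s1 k i) - arg (v (k - 1) i) := by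
      obtain rfl | hk2 := hk.1.eq_or_lt
      · exact fun i => ⟨by simpa [v] using hu2 i, by simpa [v] using hθ1 i⟩
      · rw [show v (k - 1) = s2 (k - 1) from Function.update_of_ne (by omega) _ _]
        exact fun i => ⟨hus2 _ i, hθmid k hk2 hk.2 i⟩
    rw [hS k, hΦ k, of_mul_mul_conj_mul_diagonal_mulVec_of_cophase _ _ (hus1 k)
      (fun i => (hin i).1) (fun i => (hin i).2), Fintype.card_fin,
      show v k = s2 k from Function.update_of_ne (by omega) _ _]
    rfl
  have hchain : irsChain S Φ (K - 1) *ᵥ h2 = (∏ k ∈ Icc 1 (K - 1), c k * M) • s2 (K - 1) := by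
    simpa [v, Function.update_of_ne (by omega : K - 1 ≠ 0)] using irsChain_mulVec hstep
  have hH1w : H1 *ᵥ w = (c 0 * (star h1 ⬝ᵥ w)) • h2 := by
    rw [hH1]; exact of_mul_mul_conj_mulVec _ _ _ _
  have hlast : Φ K *ᵥ s2 (K - 1) = gt := by
    rw [hΦ K]; exact diagonal_exp_mulVec_of_cophase hug (hus2 _) hθK
  have hgain : gH ⬝ᵥ ((Φ K * irsChain S Φ (K - 1) * H1) *ᵥ w) =
      c K * M * (∏ k ∈ Icc 1 (K - 1), c k * M) * (c 0 * (star h1 ⬝ᵥ w)) := by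
    rw [← mulVec_mulVec, ← mulVec_mulVec, hH1w, mulVec_smul, hchain, smul_smul, mulVec_smul,
      hlast, show gH = c K • star gt from hgH, smul_dotProduct, dotProduct_smul,
      star_dotProduct_self_of_norm_eq_one hug, Fintype.card_fin]
    simp only [smul_eq_mul]
    ring
  have hmrt : ‖star h1 ⬝ᵥ w‖ ^ 2 = N := by
    rw [hw, norm_star_dotProduct_mrt h1 (norm_exp_ofReal_mul_I _), Real.sq_sqrt (by positivity)]
    simp [hu1]
  rw [hgain]
  simp only [norm_mul, mul_pow, norm_prod, ← prod_pow, c, norm_losGain_sq hβ.le,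
    Complex.norm_natCast, hmrt]
  obtain ⟨n, rfl⟩ : ∃ n, K = n + 1 := ⟨K - 1, by omega⟩
  rw [Nat.add_sub_cancel, prod_mul_distrib, prod_div_distrib, prod_const, prod_const,
    Nat.card_Icc, Nat.add_sub_cancel]
  ring

/-- equation (11) of the paper: in the cascaded LoS channel with `K ≥ 2`
reflections and unit-modulus array responses, the co-phasing phase shifts of eq. (9)
together with the MRT beamformer `w = e^{i2πD/λ} h̃_1/‖h̃_1‖` achieve
`|h|² = M^{2K} N β^{K+1} / (d_0² d_K² ∏_{k=1}^{K-1} d_k²)`. -/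
theorem stmt5 (M N K : ℕ) (hM : 0 < M) (hN : 0 < N) (hK : 2 ≤ K)
    (lam β : ℝ) (hlam : 0 < lam) (hβ : 0 < β)
    (d : ℕ → ℝ) (hd : ∀ k ≤ K, 0 < d k)
    (h1 : Fin N → ℂ) (h2 : Fin M → ℂ) (s1 s2 : ℕ → Fin M → ℂ) (gt : Fin M → ℂ)
    (hu1 : ∀ j, ‖h1 j‖ = 1) (hu2 : ∀ i, ‖h2 i‖ = 1)
    (hus1 : ∀ k i, ‖s1 k i‖ = 1) (hus2 : ∀ k i, ‖s2 k i‖ = 1)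
    (hug : ∀ i, ‖gt i‖ = 1)
    (H1 : Matrix (Fin M) (Fin N) ℂ)
    (hH1 : H1 = Matrix.of fun i j =>
      ((Real.sqrt β / d 0 : ℝ) : ℂ) * Complex.exp (-(((2 * Real.pi * d 0 / lam : ℝ) : ℂ) * Complex.I)) *
        h2 i * (starRingEnd ℂ) (h1 j))
    (S : ℕ → Matrix (Fin M) (Fin M) ℂ)
    (hS : ∀ k, S k = Matrix.of fun i j =>
      ((Real.sqrt β / d k : ℝ) : ℂ) * Complex.exp (-(((2 * Real.pi * d k / lam : ℝ) : ℂ) * Complex.I)) *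
        s2 k i * (starRingEnd ℂ) (s1 k j))
    (gH : Fin M → ℂ)
    (hgH : gH = fun i =>
      ((Real.sqrt β / d K : ℝ) : ℂ) * Complex.exp (-(((2 * Real.pi * d K / lam : ℝ) : ℂ) * Complex.I)) *
        (starRingEnd ℂ) (gt i))
    -- co-phasing phase shifts of equation (9)
    (θ : ℕ → Fin M → ℝ)
    (hθ1 : ∀ i, θ 1 i = (s1 1 i).arg - (h2 i).arg)
    (hθK : ∀ i, θ K i = (gt i).arg - (s2 (K - 1) i).arg)
    (hθmid : ∀ k, 2 ≤ k → k ≤ K - 1 → ∀ i, θ k i = (s1 k i).arg - (s2 (k - 1) i).arg)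
    (Φ : ℕ → Matrix (Fin M) (Fin M) ℂ)
    (hΦ : ∀ k, Φ k = Matrix.diagonal fun i => Complex.exp ((θ k i : ℂ) * Complex.I))
    -- MRT active beamformer of equation (10): w = e^{i2πD/λ} h̃_1/‖h̃_1‖
    (w : Fin N → ℂ)
    (hw : w = fun j =>
      Complex.exp (((2 * Real.pi * (∑ k ∈ Finset.range (K + 1), d k) / lam : ℝ) : ℂ) * Complex.I) *
        h1 j / ((Real.sqrt (∑ j', ‖h1 j'‖ ^ 2) : ℝ) : ℂ)) :
    ‖gH ⬝ᵥ ((Φ K * irsChain S Φ (K - 1) * H1) *ᵥ w)‖ ^ 2 =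
      (M : ℝ) ^ (2 * K) * (N : ℝ) * β ^ (K + 1) /
        (d 0 ^ 2 * d K ^ 2 * ∏ k ∈ Finset.Icc 1 (K - 1), d k ^ 2) :=
  stmt5_general M N K hK lam β hβ d h1 h2 s1 s2 gt hu1 hu2 hus1 hus2 hug H1 hH1 S hS gH hgH θ hθ1
    hθK hθmid Φ hΦ w hw
end

section
/- In the setting of the cascaded LoS channel with K ≥ 2 reflections and all array-response vectors having unit-modulus entries, for EVERY choice of diagonal phase-shift matrices Φ_k = diag(e^{iθ_{k,1}},…,e^{iθ_{k,M}}) with arbitrary real θ_{k,m}, and every w ∈ ℂ^N with ‖w‖ = 1, the end-to-end channel h = gᴴ Φ_K (∏_{k=K−1}^{1} S_k Φ_k) H_1 w satisfies |h|² ≤ M^{2K} · N · β^{K+1} / (d_0² d_K² ∏_{k=1}^{K−1} d_k²). Hence the design of equations (9)–(10) attains the maximum channel power M^{2K} N κ²(Ω). -/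
/-!
Measure matrices by the `ℓ∞` operator norm (maximal absolute row sum). Every entry of the LoS
matrix `S_k` has modulus `√β / d_k`, so `‖S_k‖ ≤ M √β / d_k`, while the phase shifts are diagonal
with unimodular entries and have norm one; submultiplicativity bounds the whole reflection chain.
At the two ends, `|gᴴ x| ≤ (√β / d_K) ‖x‖₁ ≤ M (√β / d_K) ‖x‖_∞` and
`‖H_1 w‖_∞ ≤ (√β / d_0) ‖w‖₁`, and Cauchy–Schwarz gives `‖w‖₁² ≤ N ‖w‖₂² = N`.
-/

open Matrix Finset Complex

theorem norm_mul_le_of_norm_right_le_one {α : Type*} [NonUnitalSeminormedRing α] {a b : α}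
    (hb : ‖b‖ ≤ 1) : ‖a * b‖ ≤ ‖a‖ :=
  (norm_mul_le _ _).trans (mul_le_of_le_one_right (norm_nonneg _) hb)

theorem norm_mul_le_of_norm_left_le_one {α : Type*} [NonUnitalSeminormedRing α] {a b : α}
    (ha : ‖a‖ ≤ 1) : ‖a * b‖ ≤ ‖b‖ :=
  (norm_mul_le _ _).trans (mul_le_of_le_one_left (norm_nonneg _) ha)

open scoped Matrix.Norms.Operator

section

variable {m n R : Type*} [Fintype m] [Fintype n]

theorem linfty_opNorm_le_card_mul [SeminormedAddCommGroup R] {A : Matrix m n R} {a : ℝ}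
    (ha : 0 ≤ a) (hA : ∀ i j, ‖A i j‖ ≤ a) : ‖A‖ ≤ Fintype.card n * a := by
  lift a to NNReal using ha
  rw [← coe_nnnorm, linfty_opNNNorm_def]
  norm_cast
  refine Finset.sup_le fun i _ => ?_
  calc ∑ j, ‖A i j‖₊ ≤ ∑ _j : n, a := Finset.sum_le_sum fun j _ => hA i j
    _ = Fintype.card n * a := by simp

theorem norm_dotProduct_le_mul_sum [NonUnitalSeminormedRing R] {u v : n → R} {a : ℝ}
    (hu : ∀ j, ‖u j‖ ≤ a) : ‖u ⬝ᵥ v‖ ≤ a * ∑ j, ‖v j‖ :=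
  calc ‖u ⬝ᵥ v‖ ≤ ∑ j, ‖u j‖ * ‖v j‖ :=
        (norm_sum_le _ _).trans (Finset.sum_le_sum fun j _ => norm_mul_le _ _)
    _ ≤ a * ∑ j, ‖v j‖ := by
        rw [Finset.mul_sum]
        exact Finset.sum_le_sum fun j _ => mul_le_mul_of_nonneg_right (hu j) (norm_nonneg _)

theorem norm_mulVec_le_mul_sum [NonUnitalSeminormedRing R] {A : Matrix m n R} {v : n → R}
    {a : ℝ} (ha : 0 ≤ a) (hA : ∀ i j, ‖A i j‖ ≤ a) : ‖A *ᵥ v‖ ≤ a * ∑ j, ‖v j‖ :=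
  (pi_norm_le_iff_of_nonneg (by positivity)).2 fun i => norm_dotProduct_le_mul_sum (hA i)

theorem linfty_opNorm_diagonal_le_one [SeminormedAddCommGroup R] [DecidableEq m] {v : m → R}
    (hv : ∀ i, ‖v i‖ ≤ 1) : ‖diagonal v‖ ≤ 1 := by
  rw [linfty_opNorm_diagonal]
  exact (pi_norm_le_iff_of_nonneg zero_le_one).2 hv

theorem norm_dotProduct_mul_mulVec_le {l : Type*} [Fintype l] [NonUnitalSeminormedRing R]
    {g : m → R} {A : Matrix m l R} {H : Matrix l n R} {w : n → R} {a P b : ℝ}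
    (ha : 0 ≤ a) (hg : ∀ i, ‖g i‖ ≤ a) (hA : ‖A‖ ≤ P) (hb : 0 ≤ b) (hH : ∀ i j, ‖H i j‖ ≤ b) :
    ‖g ⬝ᵥ ((A * H) *ᵥ w)‖ ≤ a * Fintype.card m * P * b * ∑ j, ‖w j‖ := by
  rw [← mulVec_mulVec]
  calc _ ≤ a * ∑ i, ‖(A *ᵥ (H *ᵥ w)) i‖ := norm_dotProduct_le_mul_sum hg
    _ ≤ a * (Fintype.card m * (‖A‖ * ‖H *ᵥ w‖)) := by
        gcongr
        exact (Pi.sum_norm_apply_le_norm _).trans_eq (nsmul_eq_mul _ _) |>.trans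
          (by gcongr; exact linfty_opNorm_mulVec _ _)
    _ ≤ a * (Fintype.card m * (P * (b * ∑ j, ‖w j‖))) := by
        gcongr
        · exact (norm_nonneg _).trans hA
        · exact norm_mulVec_le_mul_sum hb hH
    _ = a * Fintype.card m * P * b * ∑ j, ‖w j‖ := by ring

end

theorem linfty_opNorm_irsChain_le {M : ℕ} {S Φ : ℕ → Matrix (Fin M) (Fin M) ℂ} {b : ℕ → ℝ}
    (j : ℕ) (hS : ∀ k ∈ Icc 1 j, ‖S k‖ ≤ b k) (hΦ : ∀ k, ‖Φ k‖ ≤ 1) :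
    ‖irsChain S Φ j‖ ≤ ∏ k ∈ Icc 1 j, b k := by
  induction j with
  | zero =>
    rw [irsChain, ← diagonal_one]
    exact linfty_opNorm_diagonal_le_one fun _ => norm_one.le
  | succ j ih =>
    have hSj : ‖S (j + 1)‖ ≤ b (j + 1) := hS (j + 1) (by simp)
    have ih' := ih fun k hk => hS k (Icc_subset_Icc_right j.le_succ hk)
    rw [irsChain, prod_Icc_succ_top (by omega), mul_comm]
    calc ‖S (j + 1) * Φ (j + 1) * irsChain S Φ j‖
        ≤ ‖S (j + 1) * Φ (j + 1)‖ * ‖irsChain S Φ j‖ := norm_mul_le _ _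
      _ ≤ b (j + 1) * ∏ k ∈ Icc 1 j, b k :=
          mul_le_mul (norm_mul_le_of_norm_right_le_one (hΦ _) |>.trans hSj) ih' (norm_nonneg _)
            ((norm_nonneg _).trans hSj)

theorem norm_ofReal_mul_exp_neg_mul_I {r : ℝ} (hr : 0 ≤ r) (t : ℝ) :
    ‖(r : ℂ) * exp (-((t : ℂ) * I))‖ = r := by
  rw [norm_mul, norm_real, Real.norm_of_nonneg hr, ← neg_mul, ← ofReal_neg,
    norm_exp_ofReal_mul_I, mul_one]

theorem sq_cascadedGain (M K : ℕ) (hK : 1 ≤ K) {β : ℝ} (hβ : 0 ≤ β) (d : ℕ → ℝ) :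
    (Real.sqrt β / d K * M * (∏ k ∈ Icc 1 (K - 1), M * (Real.sqrt β / d k)) *
        (Real.sqrt β / d 0)) ^ 2 =
      (M : ℝ) ^ (2 * K) * β ^ (K + 1) / (d 0 ^ 2 * d K ^ 2 * ∏ k ∈ Icc 1 (K - 1), d k ^ 2) := by
  obtain ⟨K, rfl⟩ : ∃ K', K = K' + 1 := ⟨K - 1, by omega⟩
  have hsq : Real.sqrt β ^ 2 = β := Real.sq_sqrt hβ
  set s := Real.sqrt β
  rw [← hsq]
  simp only [Nat.add_sub_cancel, prod_pow, prod_mul_distrib, prod_div_distrib, prod_const,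
    Nat.card_Icc]
  ring

theorem stmt6_general (M N K : ℕ) (hK : 2 ≤ K)
    (lam β : ℝ) (hβ : 0 < β)
    (d : ℕ → ℝ) (hd : ∀ k ≤ K, 0 < d k)
    (h1 : Fin N → ℂ) (h2 : Fin M → ℂ) (s1 s2 : ℕ → Fin M → ℂ) (gt : Fin M → ℂ)
    (hu1 : ∀ j, norm (h1 j) = 1) (hu2 : ∀ i, norm (h2 i) = 1)
    (hus1 : ∀ k i, norm (s1 k i) = 1) (hus2 : ∀ k i, norm (s2 k i) = 1)
    (hug : ∀ i, norm (gt i) = 1)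
    (H1 : Matrix (Fin M) (Fin N) ℂ)
    (hH1 : H1 = Matrix.of fun i j =>
      ((Real.sqrt β / d 0 : ℝ) : ℂ) * Complex.exp (-(((2 * Real.pi * d 0 / lam : ℝ) : ℂ) * Complex.I)) *
        h2 i * (starRingEnd ℂ) (h1 j))
    (S : ℕ → Matrix (Fin M) (Fin M) ℂ)
    (hS : ∀ k, S k = Matrix.of fun i j =>
      ((Real.sqrt β / d k : ℝ) : ℂ) * Complex.exp (-(((2 * Real.pi * d k / lam : ℝ) : ℂ) * Complex.I)) *
        s2 k i * (starRingEnd ℂ) (s1 k j))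
    (gH : Fin M → ℂ)
    (hgH : gH = fun i =>
      ((Real.sqrt β / d K : ℝ) : ℂ) * Complex.exp (-(((2 * Real.pi * d K / lam : ℝ) : ℂ) * Complex.I)) *
        (starRingEnd ℂ) (gt i)) :
    ∀ (θ : ℕ → Fin M → ℝ) (w : Fin N → ℂ), (∑ j, norm (w j) ^ 2 = 1) →
      norm (gH ⬝ᵥ
        (((Matrix.diagonal fun i => Complex.exp ((θ K i : ℂ) * Complex.I)) *
          irsChain S (fun k => Matrix.diagonal fun i => Complex.exp ((θ k i : ℂ) * Complex.I)) (K - 1) *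
          H1) *ᵥ w)) ^ 2 ≤
        (M : ℝ) ^ (2 * K) * (N : ℝ) * β ^ (K + 1) /
          (d 0 ^ 2 * d K ^ 2 * ∏ k ∈ Finset.Icc 1 (K - 1), d k ^ 2) := by
  intro θ w hw
  set Φ : ℕ → Matrix (Fin M) (Fin M) ℂ := fun k => diagonal fun i => exp ((θ k i : ℂ) * I)
  set c : ℕ → ℝ := fun k => Real.sqrt β / d k
  have hc : ∀ k ≤ K, 0 ≤ c k := fun k hk => div_nonneg (Real.sqrt_nonneg β) (hd k hk).le
  have hΦ : ∀ k, ‖Φ k‖ ≤ 1 :=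
    fun k => linfty_opNorm_diagonal_le_one fun i => (norm_exp_ofReal_mul_I _).le
  have hH1_entry : ∀ i j, ‖H1 i j‖ ≤ c 0 := fun i j => by
    rw [hH1, of_apply, norm_mul, norm_mul, norm_ofReal_mul_exp_neg_mul_I (hc 0 (by omega)),
      hu2, norm_conj, hu1, mul_one, mul_one]
  have hS_norm : ∀ k ∈ Icc 1 (K - 1), ‖S k‖ ≤ M * c k := fun k hk => by
    have hkK : k ≤ K := by grind
    simpa using linfty_opNorm_le_card_mul (A := S k) (hc k hkK) fun i j => by
      rw [hS, of_apply, norm_mul, norm_mul, norm_ofReal_mul_exp_neg_mul_I (hc k hkK),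
        hus2, norm_conj, hus1, mul_one, mul_one]
  have hgH_entry : ∀ i, ‖gH i‖ ≤ c K := fun i => by
    rw [hgH, norm_mul, norm_ofReal_mul_exp_neg_mul_I (hc K le_rfl), norm_conj, hug, mul_one]
  have hchain : ‖Φ K * irsChain S Φ (K - 1)‖ ≤ ∏ k ∈ Icc 1 (K - 1), M * c k :=
    norm_mul_le_of_norm_left_le_one (hΦ K) |>.trans (linfty_opNorm_irsChain_le _ hS_norm hΦ)
  have hw_l1 : (∑ j, ‖w j‖) ^ 2 ≤ N := by
    simpa [hw] using sq_sum_le_card_mul_sum_sq (s := univ) (f := fun j => ‖w j‖)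
  calc _ ≤ (c K * M * (∏ k ∈ Icc 1 (K - 1), M * c k) * c 0 * ∑ j, ‖w j‖) ^ 2 := by
        gcongr
        simpa using norm_dotProduct_mul_mulVec_le (hc K le_rfl) hgH_entry hchain
          (hc 0 (by omega)) hH1_entry
    _ ≤ (c K * M * (∏ k ∈ Icc 1 (K - 1), M * c k) * c 0) ^ 2 * N := by rw [mul_pow]; gcongr
    _ = _ := by rw [sq_cascadedGain M K (by omega) hβ.le d]; ring

/-- in the cascaded LoS channel with `K ≥ 2` reflections and unit-modulus
array responses, for EVERY choice of unit-modulus diagonal phase-shift matrices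
`Φ_k = diag(e^{iθ_{k,1}},…,e^{iθ_{k,M}})` and every unit-norm `w`, the end-to-end channel
satisfies `|h|² ≤ M^{2K} N β^{K+1} / (d_0² d_K² ∏_{k=1}^{K-1} d_k²) = M^{2K} N κ²(Ω)`. -/
theorem stmt6 (M N K : ℕ) (hM : 0 < M) (hN : 0 < N) (hK : 2 ≤ K)
    (lam β : ℝ) (hlam : 0 < lam) (hβ : 0 < β)
    (d : ℕ → ℝ) (hd : ∀ k ≤ K, 0 < d k)
    (h1 : Fin N → ℂ) (h2 : Fin M → ℂ) (s1 s2 : ℕ → Fin M → ℂ) (gt : Fin M → ℂ)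
    (hu1 : ∀ j, norm (h1 j) = 1) (hu2 : ∀ i, norm (h2 i) = 1)
    (hus1 : ∀ k i, norm (s1 k i) = 1) (hus2 : ∀ k i, norm (s2 k i) = 1)
    (hug : ∀ i, norm (gt i) = 1)
    (H1 : Matrix (Fin M) (Fin N) ℂ)
    (hH1 : H1 = Matrix.of fun i j =>
      ((Real.sqrt β / d 0 : ℝ) : ℂ) * Complex.exp (-(((2 * Real.pi * d 0 / lam : ℝ) : ℂ) * Complex.I)) *
        h2 i * (starRingEnd ℂ) (h1 j))
    (S : ℕ → Matrix (Fin M) (Fin M) ℂ)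
    (hS : ∀ k, S k = Matrix.of fun i j =>
      ((Real.sqrt β / d k : ℝ) : ℂ) * Complex.exp (-(((2 * Real.pi * d k / lam : ℝ) : ℂ) * Complex.I)) *
        s2 k i * (starRingEnd ℂ) (s1 k j))
    (gH : Fin M → ℂ)
    (hgH : gH = fun i =>
      ((Real.sqrt β / d K : ℝ) : ℂ) * Complex.exp (-(((2 * Real.pi * d K / lam : ℝ) : ℂ) * Complex.I)) *
        (starRingEnd ℂ) (gt i)) :
    ∀ (θ : ℕ → Fin M → ℝ) (w : Fin N → ℂ), (∑ j, norm (w j) ^ 2 = 1) →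
      norm (gH ⬝ᵥ
        (((Matrix.diagonal fun i => Complex.exp ((θ K i : ℂ) * Complex.I)) *
          irsChain S (fun k => Matrix.diagonal fun i => Complex.exp ((θ k i : ℂ) * Complex.I)) (K - 1) *
          H1) *ᵥ w)) ^ 2 ≤
        (M : ℝ) ^ (2 * K) * (N : ℝ) * β ^ (K + 1) /
          (d 0 ^ 2 * d K ^ 2 * ∏ k ∈ Finset.Icc 1 (K - 1), d k ^ 2) :=
  stmt6_general M N K hK lam β hβ d hd h1 h2 s1 s2 gt hu1 hu2 hus1 hus2 hug H1 hH1 S hS gH hgH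
end
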